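/- For every n ≥ 2 there exists a 2-program P with exactly n atoms that has exactly g_n stable models, where g_n = 3^{n/3} if n ≡ 0 (mod 3), g_n = 4 · 3^{(n−4)/3} if n ≡ 1 (mod 3), and g_n = 2 · 3^{(n−2)/3} if n ≡ 2 (mod 3). -/
import Mathlib


/-- A clause of a propositional logic program: an optional head (a definite
clause if `head = some h`, a constraint if `head = none`), a positive body
and a negative body. -/
structure LPClause (α : Type) where
  head : Option α
  pos : Finset α
  neg : Finset α
deriving DecidableEq

/-- A program is a finite set of clauses. -/
abbrev LPProgram (α : Type) := Finset (LPClause α)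

/-- The atoms occurring in a clause. -/
def LPClause.atoms {α : Type} [DecidableEq α] (c : LPClause α) : Finset α :=
  c.head.toFinset ∪ c.pos ∪ c.neg

/-- The atoms occurring in a program. -/
def LPProgram.atoms {α : Type} [DecidableEq α] (P : LPProgram α) : Finset α :=
  P.sup LPClause.atoms

/-- `N` is closed under the Horn rules of the reduct `P^M`: for every definite
clause of `P` whose negative body is disjoint from `M`, if its positive body
is contained in `N` then so is its head. -/
def ClosedUnder {α : Type} (P : LPProgram α) (M : Finset α) (N : Set α) : Prop :=
  ∀ c ∈ P, ∀ h : α, c.head = some h → (∀ b ∈ c.neg, b ∉ M) →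
    (↑c.pos : Set α) ⊆ N → h ∈ N

/-- `M` is a stable model of `P`: `M` is the least set closed under the rules
of the reduct `P^M` (i.e. `M = lm(P^M)`), and `M` satisfies every constraint
of `P`. -/
def IsStable {α : Type} (P : LPProgram α) (M : Finset α) : Prop :=
  ClosedUnder P M ↑M ∧ (∀ N : Set α, ClosedUnder P M N → ↑M ⊆ N) ∧
  ∀ c ∈ P, c.head = none → ¬(c.pos ⊆ M ∧ ∀ b ∈ c.neg, b ∉ M)

/-- `P` is a `t`-program: every clause has at most `t` literals, counting the head. -/
def IsTProgram {α : Type} (P : LPProgram α) (t : ℕ) : Prop :=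
  ∀ c ∈ P, c.pos.card + c.neg.card + (c.head.elim 0 fun _ => 1) ≤ t

/-- For `n ≥ 2`: `g n = 3^(n/3)` if `n ≡ 0 (mod 3)`, `g n = 4 * 3^((n-4)/3)`
if `n ≡ 1 (mod 3)`, and `g n = 2 * 3^((n-2)/3)` if `n ≡ 2 (mod 3)`. -/
def g (n : ℕ) : ℕ :=
  if n % 3 = 0 then 3 ^ (n / 3)
  else if n % 3 = 1 then 4 * 3 ^ ((n - 4) / 3)
  else 2 * 3 ^ ((n - 2) / 3)

-- helper: membership in atoms
lemma mem_atoms {P : LPProgram ℕ} {x : ℕ} :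
    x ∈ P.atoms ↔ ∃ c ∈ P, x ∈ c.atoms := by
  simp [LPProgram.atoms, Finset.mem_sup]

lemma head_mem_atoms {c : LPClause ℕ} {h : ℕ} (hc : c.head = some h) :
    h ∈ c.atoms := by
  simp [LPClause.atoms, hc]

lemma pos_subset_atoms {c : LPClause ℕ} : c.pos ⊆ c.atoms := by
  intro x hx; simp [LPClause.atoms, hx]

lemma neg_subset_atoms {c : LPClause ℕ} : c.neg ⊆ c.atoms := by
  intro x hx; simp [LPClause.atoms, hx]

lemma clause_atoms_subset {P : LPProgram ℕ} {c : LPClause ℕ} (hc : c ∈ P) :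
    c.atoms ⊆ P.atoms := by simpa [LPProgram.atoms] using Finset.le_sup (f := LPClause.atoms) hc

lemma stable_subset_atoms {P : LPProgram ℕ} {M : Finset ℕ} (h : IsStable P M) :
    M ⊆ P.atoms := by
  have hclosed : ClosedUnder P M ↑(M ∩ P.atoms) := by
    intro c hc hd hch hneg hpos
    have hdM : hd ∈ M := h.1 c hc hd hch hneg
      (hpos.trans (by simp [Finset.coe_inter]))
    have : hd ∈ P.atoms := clause_atoms_subset hc (head_mem_atoms hch)
    simp [hdM, this]
  have := h.2.1 _ hclosed
  intro x hx
  have := this hx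
  simp at this
  exact this.2

lemma atoms_union {P Q : LPProgram ℕ} : (P ∪ Q).atoms = P.atoms ∪ Q.atoms := by
  simp [LPProgram.atoms, Finset.sup_union]

lemma stable_union_restrict {P Q : LPProgram ℕ}
    (hdisj : Disjoint P.atoms Q.atoms) {M : Finset ℕ}
    (h : IsStable (P ∪ Q) M) : IsStable P (M ∩ P.atoms) := by
  set A := M ∩ P.atoms with hA
  set B := M ∩ Q.atoms with hB
  have hAM : A ⊆ M := Finset.inter_subset_left
  have hBM : B ⊆ M := Finset.inter_subset_left
  have hMsub : M ⊆ P.atoms ∪ Q.atoms := by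
    have := stable_subset_atoms h; rwa [atoms_union] at this
  -- if x ∈ M and x ∈ P.atoms then x ∈ A etc.
  refine ⟨?_, ?_, ?_⟩
  · intro c hc hd hch hneg hpos
    have hdM : hd ∈ M := by
      refine h.1 c (Finset.mem_union_left _ hc) hd hch ?_ ?_
      · intro b hb hbM
        exact hneg b hb (by
          simp only [hA, Finset.mem_inter]
          exact ⟨hbM, clause_atoms_subset hc (neg_subset_atoms hb)⟩)
      · refine hpos.trans ?_
        intro x hx
        have hx' : x ∈ M ∩ P.atoms := by exact_mod_cast hx
        exact_mod_cast (Finset.mem_inter.1 hx').1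
    have : hd ∈ P.atoms := clause_atoms_subset hc (head_mem_atoms hch)
    simp [hA, hdM, this]
  · intro N hN
    set N' : Set ℕ := (N ∩ ↑P.atoms) ∪ ↑B with hN'
    have hclosed : ClosedUnder (P ∪ Q) M N' := by
      intro c hc hd hch hneg hpos
      rcases Finset.mem_union.1 hc with hcP | hcQ
      · have hposN : (↑c.pos : Set ℕ) ⊆ N := by
          intro x hx
          have hxP : x ∈ P.atoms := clause_atoms_subset hcP (pos_subset_atoms hx)
          rcases hpos hx with hx1 | hx2
          · exact hx1.1
          · exfalso
            have hxQ : x ∈ Q.atoms := by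
              simp only [hB, Finset.coe_inter, Set.mem_inter_iff] at hx2
              exact hx2.2
            exact (Finset.disjoint_left.1 hdisj hxP) hxQ
        have hdN : hd ∈ N := by
          refine hN c hcP hd hch ?_ hposN
          intro b hb hbA
          exact hneg b hb (hAM hbA)
        have hdP : hd ∈ P.atoms := clause_atoms_subset hcP (head_mem_atoms hch)
        exact Or.inl ⟨hdN, hdP⟩
      · have hposM : (↑c.pos : Set ℕ) ⊆ ↑M := by
          intro x hx
          have hxQ : x ∈ Q.atoms := clause_atoms_subset hcQ (pos_subset_atoms hx)
          rcases hpos hx with hx1 | hx2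
          · exfalso
            exact (Finset.disjoint_left.1 hdisj hx1.2) hxQ
          · simp only [hB, Finset.coe_inter, Set.mem_inter_iff] at hx2
            exact hx2.1
        have hdM : hd ∈ M := h.1 c (Finset.mem_union_right _ hcQ) hd hch hneg hposM
        have hdQ : hd ∈ Q.atoms := clause_atoms_subset hcQ (head_mem_atoms hch)
        exact Or.inr (by simp [hB, hdM, hdQ])
    have hMN' := h.2.1 N' hclosed
    intro x hx
    simp only [hA, Finset.coe_inter, Set.mem_inter_iff, Finset.mem_coe] at hx
    rcases hMN' (by exact_mod_cast hx.1) with h1 | h2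
    · exact h1.1
    · exfalso
      simp only [hB, Finset.coe_inter, Set.mem_inter_iff, Finset.mem_coe] at h2
      exact (Finset.disjoint_left.1 hdisj hx.2) h2.2
  · intro c hc hch ⟨hpos, hneg⟩
    refine h.2.2 c (Finset.mem_union_left _ hc) hch ⟨hpos.trans hAM, ?_⟩
    intro b hb hbM
    exact hneg b hb (by
      simp only [hA, Finset.mem_inter]
      exact ⟨hbM, clause_atoms_subset hc (neg_subset_atoms hb)⟩)

lemma stable_union_iff {P Q : LPProgram ℕ}
    (hdisj : Disjoint P.atoms Q.atoms) {M : Finset ℕ} :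
    IsStable (P ∪ Q) M ↔
      ∃ A B, IsStable P A ∧ IsStable Q B ∧ M = A ∪ B := by
  constructor
  · intro h
    refine ⟨M ∩ P.atoms, M ∩ Q.atoms, stable_union_restrict hdisj h, ?_, ?_⟩
    · have h' : IsStable (Q ∪ P) M := by rwa [Finset.union_comm] at h
      exact stable_union_restrict hdisj.symm h'
    · have hMsub : M ⊆ P.atoms ∪ Q.atoms := by
        have := stable_subset_atoms h; rwa [atoms_union] at this
      ext x
      simp only [Finset.mem_union, Finset.mem_inter]
      constructor
      · intro hx
        rcases Finset.mem_union.1 (hMsub hx) with h1 | h1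
        · exact Or.inl ⟨hx, h1⟩
        · exact Or.inr ⟨hx, h1⟩
      · rintro (⟨hx, _⟩ | ⟨hx, _⟩) <;> exact hx
  · rintro ⟨A, B, hA, hB, rfl⟩
    have hAat : A ⊆ P.atoms := stable_subset_atoms hA
    have hBat : B ⊆ Q.atoms := stable_subset_atoms hB
    have hAB : Disjoint A B :=
      (hdisj.mono hAat hBat)
    refine ⟨?_, ?_, ?_⟩
    · intro c hc hd hch hneg hpos
      rcases Finset.mem_union.1 hc with hcP | hcQ
      · have : hd ∈ A := by
          refine hA.1 c hcP hd hch ?_ ?_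
          · intro b hb hbA
            exact hneg b hb (Finset.mem_union_left _ hbA)
          · intro x hx
            have hxP : x ∈ P.atoms := clause_atoms_subset hcP (pos_subset_atoms hx)
            rcases Finset.mem_union.1 (by exact_mod_cast hpos hx) with h1 | h1
            · exact_mod_cast h1
            · exact absurd (hBat h1) (Finset.disjoint_left.1 hdisj hxP)
        exact_mod_cast Finset.mem_union_left _ this
      · have : hd ∈ B := by
          refine hB.1 c hcQ hd hch ?_ ?_
          · intro b hb hbB
            exact hneg b hb (Finset.mem_union_right _ hbB)
          · intro x hx
            have hxQ : x ∈ Q.atoms := clause_atoms_subset hcQ (pos_subset_atoms hx)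
            rcases Finset.mem_union.1 (by exact_mod_cast hpos hx) with h1 | h1
            · exact absurd (hAat h1) (Finset.disjoint_right.1 hdisj hxQ)
            · exact_mod_cast h1
        exact_mod_cast Finset.mem_union_right _ this
    · intro N hN
      have hANclosed : ClosedUnder P A N := by
        intro c hcP hd hch hneg hpos
        refine hN c (Finset.mem_union_left _ hcP) hd hch ?_ hpos
        intro b hb
        have hbP : b ∈ P.atoms := clause_atoms_subset hcP (neg_subset_atoms hb)
        simp only [Finset.mem_union]
        rintro (h1 | h1)
        · exact hneg b hb h1
        · exact (Finset.disjoint_left.1 hdisj hbP) (hBat h1)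
      have hBNclosed : ClosedUnder Q B N := by
        intro c hcQ hd hch hneg hpos
        refine hN c (Finset.mem_union_right _ hcQ) hd hch ?_ hpos
        intro b hb
        have hbQ : b ∈ Q.atoms := clause_atoms_subset hcQ (neg_subset_atoms hb)
        simp only [Finset.mem_union]
        rintro (h1 | h1)
        · exact (Finset.disjoint_right.1 hdisj hbQ) (hAat h1)
        · exact hneg b hb h1
      intro x hx
      rcases Finset.mem_union.1 (by exact_mod_cast hx) with h1 | h1
      · exact hA.2.1 N hANclosed h1
      · exact hB.2.1 N hBNclosed h1
    · intro c hc hch ⟨hpos, hneg⟩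
      rcases Finset.mem_union.1 hc with hcP | hcQ
      · refine hA.2.2 c hcP hch ⟨?_, ?_⟩
        · intro x hx
          have hxP : x ∈ P.atoms := clause_atoms_subset hcP (pos_subset_atoms hx)
          rcases Finset.mem_union.1 (hpos hx) with h1 | h1
          · exact h1
          · exact absurd (hBat h1) (Finset.disjoint_left.1 hdisj hxP)
        · intro b hb hbA
          exact hneg b hb (Finset.mem_union_left _ hbA)
      · refine hB.2.2 c hcQ hch ⟨?_, ?_⟩
        · intro x hx
          have hxQ : x ∈ Q.atoms := clause_atoms_subset hcQ (pos_subset_atoms hx)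
          rcases Finset.mem_union.1 (hpos hx) with h1 | h1
          · exact absurd (hAat h1) (Finset.disjoint_right.1 hdisj hxQ)
          · exact h1
        · intro b hb hbB
          exact hneg b hb (Finset.mem_union_right _ hbB)

def pairProg (a b : ℕ) : LPProgram ℕ :=
  {⟨some a, ∅, {b}⟩, ⟨some b, ∅, {a}⟩}

def tripProg (a b c : ℕ) : LPProgram ℕ :=
  {⟨some a, ∅, {b}⟩, ⟨some a, ∅, {c}⟩, ⟨some b, ∅, {a}⟩,
   ⟨some b, ∅, {c}⟩, ⟨some c, ∅, {a}⟩, ⟨some c, ∅, {b}⟩}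

lemma pairProg_atoms {a b : ℕ} : (pairProg a b).atoms = {a, b} := by
  ext x
  simp [pairProg, LPProgram.atoms, LPClause.atoms, Finset.mem_sup]
  aesop

lemma tripProg_atoms {a b c : ℕ} : (tripProg a b c).atoms = {a, b, c} := by
  ext x
  simp [tripProg, LPProgram.atoms, LPClause.atoms, Finset.mem_sup]
  aesop

lemma pairProg_tprog {a b : ℕ} : IsTProgram (pairProg a b) 2 := by
  intro c hc
  simp [pairProg] at hc
  rcases hc with rfl | rfl <;> simp

lemma tripProg_tprog {a b c : ℕ} : IsTProgram (tripProg a b c) 2 := by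
  intro d hd
  simp [tripProg] at hd
  rcases hd with rfl | rfl | rfl | rfl | rfl | rfl <;> simp

lemma pairProg_stable {a b : ℕ} (hab : a ≠ b) {M : Finset ℕ} :
    IsStable (pairProg a b) M ↔ M = {a} ∨ M = {b} := by
  constructor
  · intro h
    have hsub : M ⊆ {a, b} := by
      have := stable_subset_atoms h; rwa [pairProg_atoms] at this
    -- not both a and b in M
    have hnotboth : ¬(a ∈ M ∧ b ∈ M) := by
      rintro ⟨ha, hb⟩
      have hcl : ClosedUnder (pairProg a b) M (∅ : Set ℕ) := by
        intro c hc hd hch hneg _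
        simp [pairProg] at hc
        rcases hc with rfl | rfl
        · exact absurd hb (by simpa using hneg b)
        · exact absurd ha (by simpa using hneg a)
      have := h.2.1 ∅ hcl
      exact absurd (this (by exact_mod_cast ha)) (by simp)
    have hone : a ∈ M ∨ b ∈ M := by
      by_contra hno
      push_neg at hno
      have : a ∈ (↑M : Set ℕ) := by
        refine h.1 ⟨some a, ∅, {b}⟩ (by simp [pairProg]) a rfl ?_ (by simp)
        intro x hx; simp at hx; subst hx; exact hno.2
      exact hno.1 (by exact_mod_cast this)
    rcases hone with ha | hb
    · left
      have hb : b ∉ M := fun hb => hnotboth ⟨ha, hb⟩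
      apply Finset.Subset.antisymm
      · intro x hx
        rcases Finset.mem_insert.1 (hsub hx) with rfl | hx'
        · simp
        · simp at hx'; subst hx'; exact absurd hx hb
      · simpa using ha
    · right
      have ha : a ∉ M := fun ha => hnotboth ⟨ha, hb⟩
      apply Finset.Subset.antisymm
      · intro x hx
        rcases Finset.mem_insert.1 (hsub hx) with rfl | hx'
        · exact absurd hx ha
        · exact hx'
      · simpa using hb
  · rintro (rfl | rfl)
    · refine ⟨?_, ?_, ?_⟩
      · intro c hc hd hch hneg _
        simp [pairProg] at hc
        rcases hc with rfl | rfl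
        · simp at hch; subst hch; simp
        · simp at hch; subst hch
          exact absurd (Finset.mem_singleton_self a) (by simpa using hneg a)
      · intro N hN
        have : a ∈ N := by
          refine hN ⟨some a, ∅, {b}⟩ (by simp [pairProg]) a rfl ?_ (by simp)
          intro x hx; simp at hx; subst hx
          simp [hab.symm]
        intro x hx; simp at hx; subst hx; exact this
      · intro c hc hch
        simp [pairProg] at hc
        rcases hc with rfl | rfl <;> simp at hch
    · refine ⟨?_, ?_, ?_⟩
      · intro c hc hd hch hneg _
        simp [pairProg] at hc
        rcases hc with rfl | rfl
        · simp at hch; subst hch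
          exact absurd (Finset.mem_singleton_self b) (by simpa using hneg b)
        · simp at hch; subst hch; simp
      · intro N hN
        have : b ∈ N := by
          refine hN ⟨some b, ∅, {a}⟩ (by simp [pairProg]) b rfl ?_ (by simp)
          intro x hx; simp at hx; subst hx
          simp [hab]
        intro x hx; simp at hx; subst hx; exact this
      · intro c hc hch
        simp [pairProg] at hc
        rcases hc with rfl | rfl <;> simp at hch

lemma tripProg_perm {a b c : ℕ} : tripProg a b c = tripProg b c a := by
  ext x
  simp [tripProg]
  tauto

lemma trip_stable_two {a b c : ℕ} (hab : a ≠ b) (hac : a ≠ c) (hbc : b ≠ c) :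
    IsStable (tripProg a b c) ({a, b} : Finset ℕ) := by
  refine ⟨?_, ?_, ?_⟩
  · intro d hd hh hch hneg _
    simp [tripProg] at hd
    rcases hd with rfl | rfl | rfl | rfl | rfl | rfl <;> simp at hch <;> subst hch
    · exact absurd (by simp : b ∈ ({a,b}:Finset ℕ)) (by simpa using hneg b)
    · simp
    · exact absurd (by simp : a ∈ ({a,b}:Finset ℕ)) (by simpa using hneg a)
    · simp
    · exact absurd (by simp : a ∈ ({a,b}:Finset ℕ)) (by simpa using hneg a)
    · exact absurd (by simp : b ∈ ({a,b}:Finset ℕ)) (by simpa using hneg b)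
  · intro N hN
    have hcM : c ∉ ({a,b} : Finset ℕ) := by simp [Ne.symm hac, Ne.symm hbc]
    have haN : a ∈ N := by
      refine hN ⟨some a, ∅, {c}⟩ (by simp [tripProg]) a rfl ?_ (by simp)
      intro x hx; simp at hx; subst hx; exact hcM
    have hbN : b ∈ N := by
      refine hN ⟨some b, ∅, {c}⟩ (by simp [tripProg]) b rfl ?_ (by simp)
      intro x hx; simp at hx; subst hx; exact hcM
    intro x hx
    simp at hx
    rcases hx with rfl | rfl
    · exact haN
    · exact hbN
  · intro d hd hch
    simp [tripProg] at hd
    rcases hd with rfl | rfl | rfl | rfl | rfl | rfl <;> simp at hch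

lemma tripProg_stable {a b c : ℕ} (hab : a ≠ b) (hac : a ≠ c) (hbc : b ≠ c)
    {M : Finset ℕ} :
    IsStable (tripProg a b c) M ↔ M = {a, b} ∨ M = {a, c} ∨ M = {b, c} := by
  constructor
  · intro h
    have hsub : M ⊆ {a, b, c} := by
      have := stable_subset_atoms h; rwa [tripProg_atoms] at this
    -- derivation rules: if y ∉ M then x ∈ M for rule x ← not y
    have hrule : ∀ x y : ℕ, (⟨some x, ∅, {y}⟩ : LPClause ℕ) ∈ tripProg a b c →
        y ∉ M → x ∈ M := by
      intro x y hxy hyM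
      have : x ∈ (↑M : Set ℕ) := by
        refine h.1 _ hxy x rfl ?_ (by simp)
        intro z hz; simp at hz; subst hz; exact hyM
      exact_mod_cast this
    have hnotall : ¬(a ∈ M ∧ b ∈ M ∧ c ∈ M) := by
      rintro ⟨ha, hb, hc⟩
      have hcl : ClosedUnder (tripProg a b c) M (∅ : Set ℕ) := by
        intro d hd hh hch hneg _
        simp [tripProg] at hd
        rcases hd with rfl | rfl | rfl | rfl | rfl | rfl
        · exact absurd hb (by simpa using hneg b)
        · exact absurd hc (by simpa using hneg c)
        · exact absurd ha (by simpa using hneg a)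
        · exact absurd hc (by simpa using hneg c)
        · exact absurd ha (by simpa using hneg a)
        · exact absurd hb (by simpa using hneg b)
      have := h.2.1 ∅ hcl
      exact absurd (this (by exact_mod_cast ha)) (by simp)
    by_cases ha : a ∈ M
    · by_cases hb : b ∈ M
      · left
        have hc : c ∉ M := fun hc => hnotall ⟨ha, hb, hc⟩
        apply Finset.Subset.antisymm
        · intro x hx
          rcases Finset.mem_insert.1 (hsub hx) with rfl | hx'
          · simp
          · rcases Finset.mem_insert.1 hx' with rfl | hx''
            · simp
            · simp at hx''; subst hx''; exact absurd hx hc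
        · intro x hx; simp at hx; rcases hx with rfl | rfl
          · exact ha
          · exact hb
      · right; left
        have hc : c ∈ M := hrule c b (by simp [tripProg]) hb
        apply Finset.Subset.antisymm
        · intro x hx
          rcases Finset.mem_insert.1 (hsub hx) with rfl | hx'
          · simp
          · rcases Finset.mem_insert.1 hx' with rfl | hx''
            · exact absurd hx hb
            · simp at hx''; subst hx''; simp
        · intro x hx; simp at hx; rcases hx with rfl | rfl
          · exact ha
          · exact hc
    · right; right
      have hb : b ∈ M := hrule b a (by simp [tripProg]) ha
      have hc : c ∈ M := hrule c a (by simp [tripProg]) ha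
      apply Finset.Subset.antisymm
      · intro x hx
        rcases Finset.mem_insert.1 (hsub hx) with rfl | hx'
        · exact absurd hx ha
        · exact hx'
      · intro x hx; simp at hx; rcases hx with rfl | rfl
        · exact hb
        · exact hc
  · rintro (rfl | rfl | rfl)
    · exact trip_stable_two hab hac hbc
    · have := trip_stable_two (a := a) (b := c) (c := b) hac hab (Ne.symm hbc)
      rwa [show tripProg a c b = tripProg a b c from by ext x; simp [tripProg]; tauto] at this
    · have := trip_stable_two (a := b) (b := c) (c := a) hbc (Ne.symm hab) (Ne.symm hac)
      rwa [show tripProg b c a = tripProg a b c from tripProg_perm.symm] at this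

lemma ncard_prod' {α β : Type*} (s : Set α) (t : Set β) :
    (s ×ˢ t).ncard = s.ncard * t.ncard := by
  rw [← Nat.card_coe_set_eq, ← Nat.card_coe_set_eq, ← Nat.card_coe_set_eq,
      Nat.card_congr (Equiv.Set.prod s t), Nat.card_prod]

lemma ncard_stable_union {P Q : LPProgram ℕ}
    (hdisj : Disjoint P.atoms Q.atoms) :
    {M : Finset ℕ | IsStable (P ∪ Q) M}.ncard =
      {M : Finset ℕ | IsStable P M}.ncard * {M : Finset ℕ | IsStable Q M}.ncard := by
  have himg : {M : Finset ℕ | IsStable (P ∪ Q) M} =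
      (fun p : Finset ℕ × Finset ℕ => p.1 ∪ p.2) ''
        ({M : Finset ℕ | IsStable P M} ×ˢ {M : Finset ℕ | IsStable Q M}) := by
    ext M
    simp only [Set.mem_setOf_eq, Set.mem_image, Set.mem_prod]
    rw [stable_union_iff hdisj]
    constructor
    · rintro ⟨A, B, hA, hB, rfl⟩; exact ⟨(A, B), ⟨hA, hB⟩, rfl⟩
    · rintro ⟨⟨A, B⟩, ⟨hA, hB⟩, rfl⟩; exact ⟨A, B, hA, hB, rfl⟩
  rw [himg]
  rw [Set.ncard_image_of_injOn, ncard_prod']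
  rintro ⟨A, B⟩ ⟨hA, hB⟩ ⟨A', B'⟩ ⟨hA', hB'⟩ heq
  simp only at heq
  have key : ∀ (X Y : Finset ℕ), IsStable P X → IsStable Q Y → X ∪ Y = A' ∪ B' →
      X = A' := by
    intro X Y hX hY hXY
    have hXa := stable_subset_atoms hX
    have hYa := stable_subset_atoms hY
    have hA'a := stable_subset_atoms hA'
    have hB'a := stable_subset_atoms hB'
    ext x
    constructor
    · intro hx
      have hxP : x ∈ P.atoms := hXa hx
      have : x ∈ A' ∪ B' := hXY ▸ Finset.mem_union_left _ hx
      rcases Finset.mem_union.1 this with h1 | h1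
      · exact h1
      · exact absurd (hB'a h1) (Finset.disjoint_left.1 hdisj hxP)
    · intro hx
      have hxP : x ∈ P.atoms := hA'a hx
      have : x ∈ X ∪ Y := hXY ▸ Finset.mem_union_left _ hx
      rcases Finset.mem_union.1 this with h1 | h1
      · exact h1
      · exact absurd (hYa h1) (Finset.disjoint_left.1 hdisj hxP)
  have hAA' : A = A' := key A B hA hB heq
  have hBB' : B = B' := by
    subst hAA'
    have hBa := stable_subset_atoms hB
    have hB'a := stable_subset_atoms hB'
    have hAa := stable_subset_atoms hA
    ext x
    constructor
    · intro hx
      have hxQ : x ∈ Q.atoms := hBa hx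
      have : x ∈ A ∪ B' := heq ▸ Finset.mem_union_right _ hx
      rcases Finset.mem_union.1 this with h1 | h1
      · exact absurd (hAa h1) (Finset.disjoint_right.1 hdisj hxQ)
      · exact h1
    · intro hx
      have hxQ : x ∈ Q.atoms := hB'a hx
      have : x ∈ A ∪ B := heq ▸ Finset.mem_union_right _ hx
      rcases Finset.mem_union.1 this with h1 | h1
      · exact absurd (hAa h1) (Finset.disjoint_right.1 hdisj hxQ)
      · exact h1
  simp [hAA', hBB']

lemma ncard_pair_stable {a b : ℕ} (hab : a ≠ b) :
    {M : Finset ℕ | IsStable (pairProg a b) M}.ncard = 2 := by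
  have : {M : Finset ℕ | IsStable (pairProg a b) M} = {({a} : Finset ℕ), {b}} := by
    ext M; simp [pairProg_stable hab]
  rw [this, Set.ncard_pair]
  intro h
  have : a ∈ ({b} : Finset ℕ) := h ▸ Finset.mem_singleton_self a
  simp at this; exact hab this

lemma ncard_trip_stable {a b c : ℕ} (hab : a ≠ b) (hac : a ≠ c) (hbc : b ≠ c) :
    {M : Finset ℕ | IsStable (tripProg a b c) M}.ncard = 3 := by
  have hset : {M : Finset ℕ | IsStable (tripProg a b c) M} =
      {({a, b} : Finset ℕ), {a, c}, {b, c}} := by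
    ext M; simp [tripProg_stable hab hac hbc]
  have h1 : ({a, b} : Finset ℕ) ≠ {a, c} := by
    intro h
    have : b ∈ ({a, c} : Finset ℕ) := h ▸ (by simp)
    simp at this; tauto
  have h2 : ({a, b} : Finset ℕ) ≠ {b, c} := by
    intro h
    have : a ∈ ({b, c} : Finset ℕ) := h ▸ (by simp)
    simp at this; tauto
  have h3 : ({a, c} : Finset ℕ) ≠ {b, c} := by
    intro h
    have : a ∈ ({b, c} : Finset ℕ) := h ▸ (by simp)
    simp at this; tauto
  rw [hset, Set.ncard_insert_of_notMem (by simp [h1, h2]),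
      Set.ncard_pair h3]

lemma g_step {m : ℕ} (hm : 2 ≤ m) : g (m + 3) = 3 * g m := by
  unfold g
  have h3 : (m + 3) % 3 = m % 3 := by omega
  have hlt : m % 3 = 0 ∨ m % 3 = 1 ∨ m % 3 = 2 := by omega
  rcases hlt with h | h | h
  · simp only [h3, h, if_true]
    have : (m + 3) / 3 = m / 3 + 1 := by omega
    rw [this, pow_succ]; ring
  · simp only [h3, h]
    norm_num
    have hm4 : 4 ≤ m := by omega
    have : (m + 3 - 4) / 3 = (m - 4) / 3 + 1 := by omega
    rw [this, pow_succ]; ring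
  · have h0 : m % 3 ≠ 0 := by omega
    have h1 : m % 3 ≠ 1 := by omega
    simp only [h3, h0, h1, if_false]
    have : (m + 3 - 2) / 3 = (m - 2) / 3 + 1 := by omega
    rw [this, pow_succ]; ring

lemma main_aux : ∀ n : ℕ, 2 ≤ n → ∃ P : LPProgram ℕ, IsTProgram P 2 ∧
    P.atoms = Finset.range n ∧ {M : Finset ℕ | IsStable P M}.ncard = g n := by
  intro n
  induction n using Nat.strong_induction_on with
  | _ n IH =>
    intro hn
    by_cases h5 : n < 5
    · interval_cases n
      · -- n = 2
        refine ⟨pairProg 0 1, pairProg_tprog, ?_, ?_⟩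
        · rw [pairProg_atoms]; decide
        · rw [ncard_pair_stable (by norm_num)]; decide
      · -- n = 3
        refine ⟨tripProg 0 1 2, tripProg_tprog, ?_, ?_⟩
        · rw [tripProg_atoms]; decide
        · rw [ncard_trip_stable (by norm_num) (by norm_num) (by norm_num)]; decide
      · -- n = 4
        have hdisj : Disjoint (pairProg 0 1).atoms (pairProg 2 3).atoms := by
          rw [pairProg_atoms, pairProg_atoms]; decide
        refine ⟨pairProg 0 1 ∪ pairProg 2 3, ?_, ?_, ?_⟩
        · intro c hc
          rcases Finset.mem_union.1 hc with h | h
          · exact pairProg_tprog c h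
          · exact pairProg_tprog c h
        · rw [atoms_union, pairProg_atoms, pairProg_atoms]; decide
        · rw [ncard_stable_union hdisj, ncard_pair_stable (by norm_num),
              ncard_pair_stable (by norm_num)]
          decide
    · -- n ≥ 5
      push_neg at h5
      obtain ⟨P, hT, hat, hcard⟩ := IH (n - 3) (by omega) (by omega)
      have hdisj : Disjoint P.atoms (tripProg (n-3) (n-2) (n-1)).atoms := by
        rw [hat, tripProg_atoms]
        rw [Finset.disjoint_left]
        intro x hx
        simp only [Finset.mem_range] at hx
        simp only [Finset.mem_insert, Finset.mem_singleton]
        omega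
      refine ⟨P ∪ tripProg (n-3) (n-2) (n-1), ?_, ?_, ?_⟩
      · intro c hc
        rcases Finset.mem_union.1 hc with h | h
        · exact hT c h
        · exact tripProg_tprog c h
      · rw [atoms_union, hat, tripProg_atoms]
        ext x
        simp only [Finset.mem_union, Finset.mem_range, Finset.mem_insert,
          Finset.mem_singleton]
        omega
      · rw [ncard_stable_union hdisj, hcard,
            ncard_trip_stable (by omega) (by omega) (by omega)]
        have := g_step (m := n - 3) (by omega)
        rw [show n - 3 + 3 = n from by omega] at this
        omega


/-- For every `n ≥ 2` there exists a 2-program with exactly `n` atoms having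
exactly `g n` stable models. -/
theorem stmt_13 (n : ℕ) (hn : 2 ≤ n) :
    ∃ P : LPProgram ℕ, IsTProgram P 2 ∧ P.atoms.card = n ∧
      {M : Finset ℕ | IsStable P M}.ncard = g n := by
  obtain ⟨P, hT, hat, hcard⟩ := main_aux n hn
  exact ⟨P, hT, by rw [hat, Finset.card_range], hcard⟩
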